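/- arXiv:math/0110234 — 2 statements merged into one kernel-verified Lean document; each statement's English description precedes it below -/
import Mathlib

section
/- Let G be a finite group, T ≤ G a cyclic subgroup with |N_G(T) : T| = 2n, and suppose a distinguished subset S ⊆ T of 'good' elements has size at least ((r-1)/(2r))·|T| with r ≥ 5, such that every element of S lies in no conjugate of T other than T itself. Then the union of the G-conjugates of S has cardinality at least |G|/(5n). -/
/-!
An element lying in both `a S a⁻¹` and `b S b⁻¹` lies in the conjugate of `T` by `a⁻¹ b`,
which must then be `T`; so conjugates of `S` by distinct cosets of `N_G(T)` are disjoint and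
their union has at least `|G : N_G(T)| · |S|` elements. Since `|G| = 2n · |G : N_G(T)| · |T|`
and `(r - 1)/(2r) ≥ 2/5` for `r ≥ 5`, this is at least `|G| / (5n)`.
-/

open Pointwise

namespace Subgroup

variable {G : Type*} [Group G]

theorem conj_smul_eq_self_iff {H : Subgroup G} {g : G} :
    (MulAut.conj g • H : Subgroup G) = H ↔ g ∈ normalizer (H : Set G) :=
  mem_normalizer_iff_map_conj_eq.symm

theorem card_eq_relIndex_normalizer_mul_index_mul_card (H : Subgroup G) :
    Nat.card G = H.relIndex (normalizer (H : Set G)) * (normalizer (H : Set G)).index *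
      Nat.card H := by
  rw [relIndex_mul_index le_normalizer, index_mul_card]

theorem injective_conj_out_of_forall_conj_eq {H : Subgroup G} {S : Set G} (hSH : S ⊆ H)
    (hS : ∀ g : G, ∀ s ∈ S, s ∈ (MulAut.conj g • H : Subgroup G) →
      (MulAut.conj g • H : Subgroup G) = H) :
    Function.Injective fun p : (G ⧸ normalizer (H : Set G)) × S => p.1.out * p.2 * p.1.out⁻¹ := by
  rintro ⟨q, s, hs⟩ ⟨q', s', hs'⟩ h
  simp only at h
  have hs_eq : s = q.out⁻¹ * (q'.out * s' * q'.out⁻¹) * q.out := by rw [← h]; group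
  have hs_mem : s ∈ (MulAut.conj (q.out⁻¹ * q'.out) • H : Subgroup G) := by
    rw [mem_smul_pointwise_iff_exists]
    exact ⟨s', hSH hs', by rw [MulAut.smul_def, MulAut.conj_apply, hs_eq]; group⟩
  have hq : q = q' := by
    rw [← QuotientGroup.out_eq' q, ← QuotientGroup.out_eq' q', QuotientGroup.eq]
    exact conj_smul_eq_self_iff.1 (hS _ s hs hs_mem)
  subst hq
  simp [mul_left_cancel (mul_right_cancel h)]

theorem index_normalizer_mul_ncard_le_ncard_iUnion_conj [Finite G] {H : Subgroup G}
    {S : Set G} (hSH : S ⊆ H)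
    (hS : ∀ g : G, ∀ s ∈ S, s ∈ (MulAut.conj g • H : Subgroup G) →
      (MulAut.conj g • H : Subgroup G) = H) :
    (normalizer (H : Set G)).index * S.ncard ≤ (⋃ g : G, (fun x => g * x * g⁻¹) '' S).ncard := by
  have hinj := injective_conj_out_of_forall_conj_eq hSH hS
  let f : (G ⧸ normalizer (H : Set G)) × S → ⋃ g : G, (fun x => g * x * g⁻¹) '' S :=
    fun p => ⟨_, Set.mem_iUnion.2 ⟨p.1.out, Set.mem_image_of_mem _ p.2.2⟩⟩
  have := Nat.card_le_card_of_injective f fun p p' h => hinj (congrArg Subtype.val h)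
  rwa [Nat.card_prod, Nat.card_coe_set_eq, Nat.card_coe_set_eq] at this

end Subgroup

theorem two_mul_le_five_mul_of_sub_one_mul_le {r t s : ℕ} (hr : 5 ≤ r)
    (h : (r - 1) * t ≤ s * (2 * r)) : 2 * t ≤ 5 * s := by
  obtain ⟨k, rfl⟩ := Nat.exists_eq_add_of_le' (by omega : 1 ≤ r)
  simp only [Nat.add_sub_cancel] at h
  nlinarith

open Pointwise in
theorem stmt8_general (G : Type*) [Group G] [Fintype G] (T : Subgroup G)
    (n r : ℕ) (hr : 5 ≤ r)
    (hindex : (T.subgroupOf (Subgroup.normalizer (T : Set G))).index = 2 * n)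
    (S : Set G) (hST : S ⊆ (T : Set G))
    (hSsize : (r - 1) * Nat.card T ≤ S.ncard * (2 * r))
    (hunique : ∀ g : G, ∀ s ∈ S, s ∈ (MulAut.conj g • T : Subgroup G) →
        (MulAut.conj g • T : Subgroup G) = T) :
    Fintype.card G ≤ (⋃ g : G, (fun x => g * x * g⁻¹) '' S).ncard * (5 * n) := by
  have hcard := T.card_eq_relIndex_normalizer_mul_index_mul_card
  rw [Subgroup.relIndex, hindex, Nat.card_eq_fintype_card] at hcard
  have hconj := Subgroup.index_normalizer_mul_ncard_le_ncard_iUnion_conj hST hunique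
  have hTS := two_mul_le_five_mul_of_sub_one_mul_le hr hSsize
  rw [hcard]
  calc 2 * n * (Subgroup.normalizer (T : Set G)).index * Nat.card T
      = (Subgroup.normalizer (T : Set G)).index * (2 * Nat.card T) * n := by ring
    _ ≤ (Subgroup.normalizer (T : Set G)).index * (5 * S.ncard) * n := by gcongr
    _ = (Subgroup.normalizer (T : Set G)).index * S.ncard * (5 * n) := by ring
    _ ≤ _ := by gcongr

open Pointwise in
theorem stmt8 (G : Type*) [Group G] [Fintype G] (T : Subgroup G) [IsCyclic T]
    (n r : ℕ) (hn : 1 ≤ n) (hr : 5 ≤ r)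
    (hindex : (T.subgroupOf (Subgroup.normalizer (T : Set G))).index = 2 * n)
    (S : Set G) (hST : S ⊆ (T : Set G))
    (hSsize : (r - 1) * Nat.card T ≤ S.ncard * (2 * r))
    (hunique : ∀ g : G, ∀ s ∈ S, s ∈ (MulAut.conj g • T : Subgroup G) →
        (MulAut.conj g • T : Subgroup G) = T) :
    Fintype.card G ≤ (⋃ g : G, (fun x => g * x * g⁻¹) '' S).ncard * (5 * n) :=
  stmt8_general G T n r hr hindex S hST hSsize hunique
end

section
/- Let V be a vector space of dimension 2n+1 over F_q (q odd) and let i, j ∈ GL(V) be involutions whose (-1)-eigenspaces have dimension 2n. Then ij fixes pointwise a subspace of codimension at most 2, and consequently the order of ij divides q(q+1) or q(q-1). -/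
/-!
The product `g = i * j` is the identity on the intersection of the two `(-1)`-eigenspaces,
which has codimension at most `2`; so `U = range (g - 1)` has dimension at most `2`, and `g` is
killed by `(X - 1) * μ`, where `μ` is the minimal polynomial of `g` on `U`. Conjugation by `i`
inverts `g` and preserves `U`, so the roots of `μ` are closed under inversion, and, as always
over `𝔽_q`, under `z ↦ z ^ q`. If `μ` splits, its roots lie in `𝔽_qˣ`, and `(X - 1) * μ` divides
`(X ^ (q - 1) - 1) ^ 3`, hence `X ^ (q * (q - 1)) - 1`. Otherwise `μ` is an irreducible
quadratic, and its roots `ξ, ξ⁻¹, ξ ^ q` cannot be pairwise distinct, so `ξ ^ (q - 1) = 1` or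
`ξ ^ (q + 1) = 1`.
-/

open Polynomial Module

theorem SemiconjBy.aeval {R A : Type*} [CommSemiring R] [Semiring A] [Algebra R A] {e a b : A}
    (h : SemiconjBy e a b) (p : R[X]) : SemiconjBy e (aeval a p) (aeval b p) := by
  induction p using Polynomial.induction_on' with
  | add p q hp hq => simpa only [map_add] using hp.add_right hq
  | monomial n c =>
    simpa only [aeval_monomial] using
      SemiconjBy.mul_right (Algebra.commutes c e).symm (h.pow_right n)

theorem Polynomial.eq_or_eq_or_eq_of_isRoot_of_natDegree_le_two {R : Type*} [CommRing R]
    [IsDomain R] {p : R[X]} (hp : p ≠ 0) (hdeg : p.natDegree ≤ 2) {a b c : R}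
    (ha : p.IsRoot a) (hb : p.IsRoot b) (hc : p.IsRoot c) : a = b ∨ a = c ∨ b = c := by
  classical
  by_contra! hne
  obtain ⟨hab, hac, hbc⟩ := hne
  have hsub : ({a, b, c} : Finset R) ⊆ p.roots.toFinset := by
    intro x hx
    simp only [Finset.mem_insert, Finset.mem_singleton] at hx
    rcases hx with rfl | rfl | rfl <;> simpa [mem_roots hp]
  have hcard := (Finset.card_le_card hsub).trans
    ((Multiset.toFinset_card_le p.roots).trans (card_roots' p))
  rw [Finset.card_eq_three.mpr ⟨a, b, c, hab, hac, hbc, rfl⟩] at hcard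
  omega

theorem Polynomial.splits_or_irreducible_of_natDegree_le_two {K : Type*} [Field K] {f : K[X]}
    (hf : f.natDegree ≤ 2) : f.Splits ∨ Irreducible f := by
  rcases Nat.lt_or_ge f.natDegree 2 with h | h
  · exact Or.inl (Splits.of_natDegree_le_one (by omega))
  refine or_iff_not_imp_right.mpr fun hirr => ?_
  obtain ⟨a, ha⟩ := Multiset.exists_mem_of_ne_zero
    (mt (irreducible_iff_roots_eq_zero_of_degree_le_three h (by omega)).mpr hirr)
  rw [← mul_divByMonic_eq_iff_isRoot.mpr (mem_roots'.mp ha).2, splits_X_sub_C_mul_iff]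
  exact Splits.of_natDegree_le_one
    (by rw [natDegree_divByMonic _ (monic_X_sub_C a), natDegree_X_sub_C]; omega)

theorem minpoly.aeval_root_inv_eq_zero {F R : Type*} [Field F] [Ring R] [Algebra F R] {x y : R}
    (hxy : x * y = 1) (hy : Polynomial.aeval y (minpoly F x) = 0)
    [Fact (Irreducible (minpoly F x))] :
    Polynomial.aeval (AdjoinRoot.root (minpoly F x))⁻¹ (minpoly F x) = 0 := by
  set ξ := AdjoinRoot.root (minpoly F x)
  -- evaluation at `x` embeds `F[X] ⧸ (minpoly F x)` into `R`, and it sends `ξ⁻¹` to `y`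
  let Φ : AdjoinRoot (minpoly F x) →ₐ[F] R :=
    Ideal.Quotient.liftₐ _ (Polynomial.aeval x) fun p hp => by
      obtain ⟨c, rfl⟩ := Ideal.mem_span_singleton'.mp hp
      rw [map_mul, minpoly.aeval, mul_zero]
  have hΦmk (p : F[X]) : Φ (AdjoinRoot.mk _ p) = Polynomial.aeval x p := rfl
  have hΦ : Function.Injective Φ := by
    refine (injective_iff_map_eq_zero Φ).mpr fun a ha => ?_
    induction a using AdjoinRoot.induction_on with
    | ih p => exact AdjoinRoot.mk_eq_zero.mpr (minpoly.dvd F x (by rwa [hΦmk] at ha))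
  have hξ : Φ ξ = x := (hΦmk X).trans (aeval_X x)
  have hξ0 : ξ ≠ 0 := fun h => one_ne_zero (hΦ (by rw [map_one, map_zero, ← hxy, ← hξ, h,
    map_zero, zero_mul]))
  have hΦinv : Φ ξ⁻¹ = y :=
    calc Φ ξ⁻¹ = Φ ξ⁻¹ * (x * y) := by rw [hxy, mul_one]
      _ = Φ (ξ⁻¹ * ξ) * y := by rw [map_mul, hξ, mul_assoc]
      _ = y := by rw [inv_mul_cancel₀ hξ0, map_one, one_mul]
  apply hΦ
  rw [← aeval_algHom_apply, hΦinv, hy, map_zero]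

namespace LinearMap

variable {F V : Type*} [Field F] [AddCommGroup V] [Module F V]

theorem aeval_restrict_apply {f : Module.End F V} {U : Submodule F V} (hf : ∀ x ∈ U, f x ∈ U)
    (p : F[X]) (x : U) : (aeval (f.restrict hf) p x : V) = aeval f p x := by
  induction p using Polynomial.induction_on' with
  | add p q hp hq => simp only [map_add, add_apply, Submodule.coe_add, hp, hq]
  | monomial n c =>
    simp only [aeval_monomial, Module.End.mul_apply, Module.algebraMap_end_apply,
      Submodule.coe_smul, Module.End.pow_restrict n hf]
    rfl

theorem aeval_restrict_eq_zero_of_semiconjBy {e f f' : Module.End F V}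
    (he : Function.Injective e) (hconj : SemiconjBy e f' f) {U : Submodule F V}
    (heU : ∀ x ∈ U, e x ∈ U) (hf : ∀ x ∈ U, f x ∈ U) (hf' : ∀ x ∈ U, f' x ∈ U) {p : F[X]}
    (hp : aeval (f.restrict hf) p = 0) : aeval (f'.restrict hf') p = 0 := by
  ext x
  apply he
  rw [aeval_restrict_apply, ← Module.End.mul_apply, (hconj.aeval p).eq, Module.End.mul_apply,
    ← aeval_restrict_apply hf p ⟨e x, heU x x.2⟩, hp]
  simp

theorem apply_mem_range_of_mul_eq {e a b c : Module.End F V} (h : e * a = b * c) {x : V}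
    (hx : x ∈ range a) : e x ∈ range b := by
  obtain ⟨v, rfl⟩ := hx
  exact ⟨c v, by rw [← Module.End.mul_apply, ← h, Module.End.mul_apply]⟩

theorem aeval_X_sub_one_mul_minpoly_restrict_eq_zero (f : Module.End F V)
    (hf : ∀ x ∈ range (f - 1), f x ∈ range (f - 1)) :
    aeval f ((X - 1) * minpoly F (f.restrict hf)) = 0 := by
  ext v
  rw [mul_comm, map_mul, Module.End.mul_apply, map_sub, aeval_X, map_one,
    ← aeval_restrict_apply hf _ ⟨_, mem_range_self _ v⟩, minpoly.aeval]
  rfl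

variable [FiniteDimensional F V]

theorem natDegree_minpoly_le_finrank (f : Module.End F V) :
    (minpoly F f).natDegree ≤ finrank F V :=
  (natDegree_le_of_dvd (minpoly_dvd_charpoly f) (charpoly_monic f).ne_zero).trans
    (charpoly_natDegree f).le

theorem finrank_range_sub_one_le {f : Module.End F V} {W : Submodule F V}
    (hW : ∀ v ∈ W, f v = v) : finrank F (range (f - 1)) ≤ finrank F V - finrank F W := by
  have hker : W ≤ ker (f - 1) := fun v hv => by simp [hW v hv]
  have := finrank_range_add_finrank_ker (f - 1)
  have := Submodule.finrank_mono hker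
  omega

end LinearMap

theorem Submodule.finrank_sub_finrank_inf_le {F V : Type*} [Field F] [AddCommGroup V]
    [Module F V] [FiniteDimensional F V] (A B : Submodule F V) :
    finrank F V - finrank F ↥(A ⊓ B) ≤
      (finrank F V - finrank F A) + (finrank F V - finrank F B) := by
  have := Submodule.finrank_sup_add_finrank_inf_eq A B
  have := (A ⊔ B).finrank_le
  have := A.finrank_le
  have := B.finrank_le
  omega

theorem orderOf_dvd_of_aeval_eq_zero_of_dvd {F R : Type*} [CommRing F] [Ring R] [Algebra F R]
    {u : Rˣ} {p : F[X]} (hp : aeval (u : R) p = 0) {N : ℕ} (hN : p ∣ X ^ N - 1) :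
    orderOf u ∣ N := by
  obtain ⟨c, hc⟩ := hN
  have h := congrArg (aeval (u : R)) hc
  rw [map_mul, hp, zero_mul, map_sub, map_pow, aeval_X, map_one, sub_eq_zero] at h
  exact orderOf_dvd_of_pow_eq_one (Units.ext (by simpa using h))

namespace FiniteField

variable {F : Type*} [Field F] [Fintype F]

theorem X_pow_sub_one_pow_card (N : ℕ) :
    ((X : F[X]) ^ N - 1) ^ Fintype.card F = X ^ (Fintype.card F * N) - 1 := by
  rw [← expand_card, map_sub, map_pow, expand_X, map_one, pow_mul]

theorem dvd_X_pow_card_sub_one_sub_one_pow_natDegree {f : F[X]} (hf : f.Splits)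
    (h0 : f.coeff 0 ≠ 0) : f ∣ (X ^ (Fintype.card F - 1) - 1) ^ f.natDegree := by
  have hroot : ∀ a ∈ f.roots, X - C a ∣ (X ^ (Fintype.card F - 1) - 1 : F[X]) := by
    intro a ha
    have ha0 : a ≠ 0 := by
      rintro rfl
      exact h0 (by simpa [coeff_zero_eq_eval_zero] using (mem_roots'.mp ha).2)
    rw [dvd_iff_isRoot, IsRoot, eval_sub, eval_pow, eval_X, eval_one,
      pow_card_sub_one_eq_one a ha0, sub_self]
  have hlc : f.leadingCoeff ≠ 0 := leadingCoeff_ne_zero.mpr fun h => h0 (by simp [h])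
  calc f = C f.leadingCoeff * (f.roots.map fun a => X - C a).prod := hf.eq_prod_roots
    _ ∣ (f.roots.map fun _ => (X ^ (Fintype.card F - 1) - 1 : F[X])).prod :=
      (C_mul_dvd hlc).mpr (Multiset.prod_dvd_prod_of_dvd _ _ hroot)
    _ = (X ^ (Fintype.card F - 1) - 1) ^ f.natDegree := by
      rw [Multiset.map_const', Multiset.prod_replicate, hf.natDegree_eq_card_roots]

theorem dvd_X_pow_card_sub_one_or_dvd_X_pow_card_add_one {μ : F[X]} [Fact (Irreducible μ)]
    (hodd : Odd (Fintype.card F)) (hdeg : μ.natDegree ≤ 2) (h0 : μ.coeff 0 ≠ 0)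
    (hinv : aeval (AdjoinRoot.root μ)⁻¹ μ = 0) :
    μ ∣ X ^ (Fintype.card F - 1) - 1 ∨ μ ∣ X ^ (Fintype.card F + 1) - 1 := by
  set q := Fintype.card F
  set ξ := AdjoinRoot.root μ
  have hdvd (N : ℕ) : μ ∣ X ^ N - 1 ↔ ξ ^ N = 1 := by
    rw [← AdjoinRoot.mk_eq_zero, ← AdjoinRoot.aeval_eq, map_sub, map_pow, aeval_X, map_one,
      sub_eq_zero]
  have hξ : aeval ξ μ = 0 := by rw [AdjoinRoot.aeval_eq, AdjoinRoot.mk_self]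
  have hξ0 : ξ ≠ 0 := by
    intro h
    rw [h, ← coeff_zero_eq_aeval_zero'] at hξ
    exact h0 (AdjoinRoot.coe_injective' (hξ.trans (map_zero _).symm))
  have hξq : aeval (ξ ^ q) μ = 0 := by
    rw [← expand_aeval, expand_card, map_pow, hξ, zero_pow Fintype.card_ne_zero]
  have hroot (z : AdjoinRoot μ) (hz : aeval z μ = 0) : (μ.map (algebraMap F _)).IsRoot z := by
    rwa [IsRoot, eval_map_algebraMap]
  obtain ⟨k, hk⟩ := hodd
  -- the quadratic `μ` cannot have the three distinct roots `ξ`, `ξ⁻¹`, `ξ ^ q`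
  rcases (μ.map (algebraMap F _)).eq_or_eq_or_eq_of_isRoot_of_natDegree_le_two
    (Polynomial.map_ne_zero (Fact.out : Irreducible μ).ne_zero) (by rwa [natDegree_map])
    (hroot _ hξ) (hroot _ hinv) (hroot _ hξq) with h | h | h
  · left
    have hsq : ξ ^ 2 = 1 := by
      rw [sq]
      nth_rewrite 2 [h]
      exact mul_inv_cancel₀ hξ0
    rw [hdvd, show q - 1 = 2 * k by omega, pow_mul, hsq, one_pow]
  · left
    rw [hdvd]
    refine mul_right_cancel₀ hξ0 ?_
    rw [← pow_succ, show q - 1 + 1 = q by omega, ← h, one_mul]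
  · right
    rw [hdvd, pow_succ, ← h, inv_mul_cancel₀ hξ0]

theorem X_sub_one_mul_minpoly_dvd {R : Type*} [Ring R] [Algebra F R]
    (hodd : Odd (Fintype.card F)) {x y : R} (hxy : x * y = 1)
    (hy : aeval y (minpoly F x) = 0) (h0 : (minpoly F x).coeff 0 ≠ 0)
    (hdeg : (minpoly F x).natDegree ≤ 2) :
    (X - 1) * minpoly F x ∣ X ^ (Fintype.card F * (Fintype.card F + 1)) - 1 ∨
      (X - 1) * minpoly F x ∣ X ^ (Fintype.card F * (Fintype.card F - 1)) - 1 := by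
  set q := Fintype.card F
  have hq : 3 ≤ q := by
    have : 1 < q := Fintype.one_lt_card
    obtain ⟨k, hk⟩ := hodd
    omega
  rcases splits_or_irreducible_of_natDegree_le_two hdeg with hs | hirr
  · right
    have hs' : ((X - 1) * minpoly F x).Splits := by
      rw [← C_1, splits_X_sub_C_mul_iff]
      exact hs
    have h0' : ((X - 1) * minpoly F x).coeff 0 ≠ 0 := by
      simpa [mul_coeff_zero] using h0
    have hdeg' : ((X - 1) * minpoly F x).natDegree ≤ q := by
      have hX1 : (X - 1 : F[X]).natDegree = 1 := by simpa using natDegree_X_sub_C (1 : F)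
      have := natDegree_mul_le (p := (X - 1 : F[X])) (q := minpoly F x)
      omega
    rw [← X_pow_sub_one_pow_card]
    exact (dvd_X_pow_card_sub_one_sub_one_pow_natDegree hs' h0').trans (pow_dvd_pow _ hdeg')
  · have := Fact.mk hirr
    have hsq (N : ℕ) (h : minpoly F x ∣ X ^ N - 1) :
        (X - 1) * minpoly F x ∣ X ^ (q * N) - 1 := by
      have hX1 : (X - 1 : F[X]) ∣ X ^ N - 1 := by
        simpa using sub_dvd_pow_sub_pow (X : F[X]) 1 N
      rw [← X_pow_sub_one_pow_card]
      exact (mul_dvd_mul hX1 h).trans (by rw [← sq]; exact pow_dvd_pow _ (by omega))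
    exact (dvd_X_pow_card_sub_one_or_dvd_X_pow_card_add_one hodd hdeg h0
      (minpoly.aeval_root_inv_eq_zero hxy hy)).symm.imp (hsq _) (hsq _)

end FiniteField

open LinearMap in
theorem orderOf_dvd_of_isConj_inv {F V : Type*} [Field F] [Fintype F] [AddCommGroup V]
    [Module F V] [FiniteDimensional F V] (hodd : Odd (Fintype.card F))
    {g : (Module.End F V)ˣ} (hg : IsConj g g⁻¹)
    (hU : finrank F (range ((g : Module.End F V) - 1)) ≤ 2) :
    orderOf g ∣ Fintype.card F * (Fintype.card F + 1) ∨
      orderOf g ∣ Fintype.card F * (Fintype.card F - 1) := by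
  obtain ⟨c, hc⟩ := isConj_iff.mp hg
  have hcg : SemiconjBy c g g⁻¹ := mul_inv_eq_iff_eq_mul.mp hc
  have hcg' : SemiconjBy c g⁻¹ g := by simpa using hcg.inv_right
  set G : Module.End F V := ↑g
  set G' : Module.End F V := ↑g⁻¹
  set C : Module.End F V := ↑c
  have hGG' : G * G' = 1 := g.mul_inv
  have hG'G : G' * G = 1 := g.inv_mul
  have hCG : C * G = G' * C := congrArg Units.val hcg.eq
  have hGU : ∀ x ∈ range (G - 1), G x ∈ range (G - 1) := fun x =>
    apply_mem_range_of_mul_eq (c := G) (by rw [mul_sub, sub_mul, mul_one, one_mul])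
  have hG'U : ∀ x ∈ range (G - 1), G' x ∈ range (G - 1) := fun x =>
    apply_mem_range_of_mul_eq (c := G')
      (by rw [mul_sub, sub_mul, mul_one, one_mul, hGG', hG'G])
  have hCU : ∀ x ∈ range (G - 1), C x ∈ range (G - 1) := fun x =>
    apply_mem_range_of_mul_eq (c := -(G' * C)) (by
      rw [mul_sub, mul_one, hCG, mul_neg, sub_mul, one_mul, ← mul_assoc, hGG', one_mul]
      abel)
  set A := G.restrict hGU
  set A' := G'.restrict hG'U
  have hAA' : A * A' = 1 := LinearMap.ext fun x => Subtype.ext (LinearMap.congr_fun hGG' x)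
  have hA'A : A' * A = 1 := LinearMap.ext fun x => Subtype.ext (LinearMap.congr_fun hG'G x)
  have hA' : aeval A' (minpoly F A) = 0 :=
    aeval_restrict_eq_zero_of_semiconjBy
      (Function.LeftInverse.injective (g := ↑c⁻¹) fun x => LinearMap.congr_fun c.inv_mul x)
      (congrArg Units.val hcg'.eq) hCU hGU hG'U (minpoly.aeval F A)
  have h0 : (minpoly F A).coeff 0 ≠ 0 := minpoly_coeff_zero_of_injective
    (Function.LeftInverse.injective (g := A') fun x => LinearMap.congr_fun hA'A x)
  have hann := aeval_X_sub_one_mul_minpoly_restrict_eq_zero G hGU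
  exact (FiniteField.X_sub_one_mul_minpoly_dvd hodd hAA' hA' h0
    ((natDegree_minpoly_le_finrank A).trans hU)).imp
    (orderOf_dvd_of_aeval_eq_zero_of_dvd hann) (orderOf_dvd_of_aeval_eq_zero_of_dvd hann)

theorem stmt10_general (F : Type*) [Field F] [Fintype F] (q n : ℕ)
    (hq : Fintype.card F = q) (hodd : Odd q)
    (V : Type*) [AddCommGroup V] [Module F V] [FiniteDimensional F V]
    (hdim : Module.finrank F V = 2 * n + 1)
    (i j : (V →ₗ[F] V)ˣ) (hi : i * i = 1) (hj : j * j = 1)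
    (hVi : Module.finrank F (Module.End.eigenspace (i : V →ₗ[F] V) (-1)) = 2 * n)
    (hVj : Module.finrank F (Module.End.eigenspace (j : V →ₗ[F] V) (-1)) = 2 * n) :
    (∃ W : Submodule F V, Module.finrank F V - Module.finrank F W ≤ 2 ∧
        ∀ v ∈ W, ((i * j : (V →ₗ[F] V)ˣ) : V →ₗ[F] V) v = v) ∧
      (orderOf (i * j) ∣ q * (q + 1) ∨ orderOf (i * j) ∣ q * (q - 1)) := by
  have hinf := Submodule.finrank_sub_finrank_inf_le
    (Module.End.eigenspace (i : V →ₗ[F] V) (-1)) (Module.End.eigenspace (j : V →ₗ[F] V) (-1))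
  set W :=
    Module.End.eigenspace (i : V →ₗ[F] V) (-1) ⊓ Module.End.eigenspace (j : V →ₗ[F] V) (-1)
  have hcodim : Module.finrank F V - Module.finrank F W ≤ 2 := by omega
  have hfix : ∀ v ∈ W, ((i * j : (V →ₗ[F] V)ˣ) : V →ₗ[F] V) v = v := by
    rintro v ⟨hvi, hvj⟩
    rw [SetLike.mem_coe, Module.End.mem_eigenspace_iff] at hvi hvj
    simp [hvi, hvj]
  refine ⟨⟨W, hcodim, hfix⟩, ?_⟩
  have hconj : IsConj (i * j) (i * j)⁻¹ := isConj_iff.mpr ⟨i, by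
    rw [mul_inv_rev, inv_eq_of_mul_eq_one_right hi, inv_eq_of_mul_eq_one_right hj,
      ← mul_assoc, hi, one_mul]⟩
  subst hq
  exact orderOf_dvd_of_isConj_inv hodd hconj
    ((LinearMap.finrank_range_sub_one_le hfix).trans hcodim)

theorem stmt10 (F : Type*) [Field F] [Fintype F] (q n : ℕ)
    (hq : Fintype.card F = q) (hodd : Odd q) (hn : 1 ≤ n)
    (V : Type*) [AddCommGroup V] [Module F V] [FiniteDimensional F V]
    (hdim : Module.finrank F V = 2 * n + 1)
    (i j : (V →ₗ[F] V)ˣ) (hi : i * i = 1) (hj : j * j = 1)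
    (hVi : Module.finrank F (Module.End.eigenspace (i : V →ₗ[F] V) (-1)) = 2 * n)
    (hVj : Module.finrank F (Module.End.eigenspace (j : V →ₗ[F] V) (-1)) = 2 * n) :
    (∃ W : Submodule F V, Module.finrank F V - Module.finrank F W ≤ 2 ∧
        ∀ v ∈ W, ((i * j : (V →ₗ[F] V)ˣ) : V →ₗ[F] V) v = v) ∧
      (orderOf (i * j) ∣ q * (q + 1) ∨ orderOf (i * j) ∣ q * (q - 1)) :=
  stmt10_general F q n hq hodd V hdim i j hi hj hVi hVj
end
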